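/- Suppose every vertical segment {x₁}×[0,1] with x₁ ∈ [0,1] intersects at least two rectangles R_u with u ∈ J^ñ. Then for every x₁ ∈ [0,1], the set ({x₁}×[0,1]) ∩ E has diameter at least δ·s_*^{ñ-1}, where δ is the minimal distance between distinct rectangles R_i, R_j (i ≠ j) and s_* = min_j s_j. -/

import Mathlib

/-!
The first coordinates of the maps `f j` form an iterated function system `g j t = r j t + a j`
on `ℝ`, and the projection `π₁ E` is a closed set invariant under it. The vertical-segment
condition says `[0,1] ⊆ Φ^ñ [0,1]` for the Hutchinson operator `Φ` of `g`; since `Φ` contracts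
distances to `π₁ E`, this forces `[0,1] ⊆ π₁ E`. Projecting commutes with the maps, so every
vertical line `x₁ = c` that meets a rectangle `R_u` also meets `E ∩ R_u`. Taking the two distinct
words `u ≠ v` given by the condition, they agree up to some position `k < ñ` and then enter
distinct first-level rectangles, at distance `≥ δ`; the common prefix of length `k` shrinks
distances by at most `s_*^k`.
-/

open Set Function Filter Topology
open scoped NNReal

section Words

variable {ι X Y : Type*}

/-- `wordImage f [j₁, …, jₙ] S = f j₁ '' (⋯ (f jₙ '' S))`; for `S = Q` this is the paper's `R_u`. -/
def wordImage (f : ι → X → X) (l : List ι) (S : Set X) : Set X :=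
  l.foldr (fun j T => f j '' T) S

def hutchinson (f : ι → X → X) (S : Set X) : Set X := ⋃ j, f j '' S

variable (f : ι → X → X)

@[simp] lemma wordImage_cons (j : ι) (l : List ι) (S : Set X) :
    wordImage f (j :: l) S = f j '' wordImage f l S := rfl

lemma wordImage_mono (l : List ι) : Monotone (wordImage f l) := by
  induction l with
  | nil => exact monotone_id
  | cons j l ih => exact fun S T h => image_mono (ih h)

lemma wordImage_subset {S : Set X} (h : ∀ j, f j '' S ⊆ S) (l : List ι) :
    wordImage f l S ⊆ S := by
  induction l with
  | nil => exact subset_rfl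
  | cons j l ih => exact (image_mono ih).trans (h j)

lemma hutchinson_mono : Monotone (hutchinson f) :=
  fun _ _ h => iUnion_mono fun _ => image_mono h

lemma wordImage_subset_iterate_hutchinson (l : List ι) (S : Set X) :
    wordImage f l S ⊆ (hutchinson f)^[l.length] S := by
  induction l with
  | nil => exact subset_rfl
  | cons j l ih =>
    rw [List.length_cons, iterate_succ_apply']
    exact (image_mono ih).trans (subset_iUnion (fun i => f i '' _) j)

variable {f} {π : X → Y} {g : ι → Y → Y}

lemma image_wordImage_of_semiconj (h : ∀ j, Semiconj π (f j) (g j)) (l : List ι) (S : Set X) :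
    π '' wordImage f l S = wordImage g l (π '' S) := by
  induction l with
  | nil => rfl
  | cons j l ih => rw [wordImage_cons, wordImage_cons, (h j).set_image, ih]

lemma image_hutchinson_of_semiconj (h : ∀ j, Semiconj π (f j) (g j)) (S : Set X) :
    π '' hutchinson f S = hutchinson g (π '' S) := by
  simp only [hutchinson, image_iUnion, fun j => (h j).set_image S]

lemma image_wordImage_mono_of_semiconj (h : ∀ j, Semiconj π (f j) (g j)) {S T : Set X}
    (hST : π '' S ⊆ π '' T) (l : List ι) : π '' wordImage f l S ⊆ π '' wordImage f l T := by
  rw [image_wordImage_of_semiconj h, image_wordImage_of_semiconj h]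
  exact wordImage_mono g l hST

end Words

section Contraction

variable {ι Y : Type*} [PseudoMetricSpace Y] {g : ι → Y → Y} {ρ : ℝ≥0}

lemma exists_dist_le_of_mem_hutchinson (hg : ∀ j, LipschitzWith ρ (g j)) {S T : Set Y} {d : ℝ}
    (hST : ∀ x ∈ S, ∃ y ∈ T, dist x y ≤ d) :
    ∀ x ∈ hutchinson g S, ∃ y ∈ hutchinson g T, dist x y ≤ ρ * d := by
  intro z hz
  obtain ⟨j, x, hx, rfl⟩ := mem_iUnion.1 hz
  obtain ⟨y, hy, hxy⟩ := hST x hx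
  exact ⟨g j y, mem_iUnion.2 ⟨j, mem_image_of_mem _ hy⟩,
    ((hg j).dist_le_mul x y).trans (by gcongr)⟩

lemma exists_dist_le_of_mem_iterate_hutchinson (hg : ∀ j, LipschitzWith ρ (g j))
    {S T : Set Y} {d : ℝ} (hST : ∀ x ∈ S, ∃ y ∈ T, dist x y ≤ d) (n : ℕ) :
    ∀ x ∈ (hutchinson g)^[n] S, ∃ y ∈ (hutchinson g)^[n] T, dist x y ≤ ρ ^ n * d := by
  induction n with
  | zero => simpa using hST
  | succ n ih =>
    rw [iterate_succ_apply', iterate_succ_apply', pow_succ', mul_assoc]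
    exact exists_dist_le_of_mem_hutchinson hg ih

theorem subset_of_subset_iterate_hutchinson (hg : ∀ j, LipschitzWith ρ (g j)) (hρ : ρ < 1)
    {P I : Set Y} (hPc : IsClosed P) (hPne : P.Nonempty) (hP : hutchinson g P ⊆ P)
    (hIb : Bornology.IsBounded I) {n : ℕ} (hn : 0 < n) (hI : I ⊆ (hutchinson g)^[n] I) :
    I ⊆ P := by
  obtain ⟨p₀, hp₀⟩ := hPne
  obtain ⟨D, hD⟩ := hIb.subset_closedBall p₀
  have hIP : ∀ x ∈ I, ∃ y ∈ P, dist x y ≤ D := fun x hx => ⟨p₀, hp₀, hD hx⟩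
  have hI_iter : ∀ k, I ⊆ (hutchinson g)^[n * k] I := by
    intro k
    induction k with
    | zero => exact subset_rfl
    | succ k ih =>
      rw [Nat.mul_succ, iterate_add_apply]
      exact ih.trans ((hutchinson_mono g).iterate _ hI)
  have hP_iter : ∀ N, (hutchinson g)^[N] P ⊆ P := by
    intro N
    induction N with
    | zero => exact subset_rfl
    | succ N ih =>
      rw [iterate_succ_apply']
      exact (hutchinson_mono g ih).trans hP
  have hlim : Tendsto (fun k => (ρ : ℝ) ^ (n * k) * D) atTop (𝓝 0) := by
    simpa [pow_mul] using (tendsto_pow_atTop_nhds_zero_of_lt_one (by positivity)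
      (pow_lt_one₀ (by positivity) (by exact_mod_cast hρ) hn.ne')).mul_const D
  intro x hx
  rw [← hPc.closure_eq, Metric.mem_closure_iff]
  intro ε hε
  obtain ⟨k, hk⟩ := (hlim.eventually (gt_mem_nhds hε)).exists
  obtain ⟨y, hy, hxy⟩ := exists_dist_le_of_mem_iterate_hutchinson hg hIP (n * k) x (hI_iter k hx)
  exact ⟨y, hP_iter _ hy, hxy.trans_lt (by exact_mod_cast hk)⟩

theorem image_subset_image_of_cover [T2Space Y] {X : Type*} [TopologicalSpace X]
    {f : ι → X → X} {π : X → Y} (hπ : Continuous π) (hsemi : ∀ j, Semiconj π (f j) (g j))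
    (hg : ∀ j, LipschitzWith ρ (g j)) (hρ : ρ < 1) {Q E : Set X} (hEc : IsCompact E)
    (hEne : E.Nonempty) (hE : hutchinson f E ⊆ E)
    (hQ : Bornology.IsBounded (π '' Q)) {n : ℕ} (hn : 0 < n)
    (hcover : ∀ y ∈ π '' Q, ∃ l : List ι, l.length = n ∧ y ∈ π '' wordImage f l Q) :
    π '' Q ⊆ π '' E := by
  refine subset_of_subset_iterate_hutchinson hg hρ (hEc.image hπ).isClosed (hEne.image π) ?_ hQ
    hn fun y hy => ?_
  · rw [← image_hutchinson_of_semiconj hsemi]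
    exact image_mono hE
  · obtain ⟨l, rfl, hyl⟩ := hcover y hy
    rw [image_wordImage_of_semiconj hsemi] at hyl
    exact wordImage_subset_iterate_hutchinson g l _ hyl

end Contraction

section Separation

variable {ι X : Type*} [PseudoMetricSpace X] {f : ι → X → X} {Q : Set X} {δ c : ℝ}

theorem le_dist_of_mem_wordImage (hQ : ∀ j, f j '' Q ⊆ Q) (hδ0 : 0 ≤ δ)
    (hδ : ∀ i j, i ≠ j → ∀ x ∈ f i '' Q, ∀ y ∈ f j '' Q, δ ≤ dist x y)
    (hc0 : 0 ≤ c) (hc1 : c ≤ 1) (hc : ∀ j x y, c * dist x y ≤ dist (f j x) (f j y))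
    {l l' : List ι} (hlen : l.length = l'.length) (hne : l ≠ l') {x y : X}
    (hx : x ∈ wordImage f l Q) (hy : y ∈ wordImage f l' Q) :
    δ * c ^ (l.length - 1) ≤ dist x y := by
  induction l generalizing l' x y with
  | nil => exact absurd (List.length_eq_zero_iff.1 hlen.symm).symm hne
  | cons i t ih =>
    obtain _ | ⟨j, t'⟩ := l'
    · simp at hlen
    obtain ⟨x', hx', rfl⟩ := hx
    obtain ⟨y', hy', rfl⟩ := hy
    by_cases hij : i = j
    · subst hij
      have htt' : t ≠ t' := fun h => hne (h ▸ rfl)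
      have hlen' : t.length = t'.length := by simpa using hlen
      have ht : 0 < t.length := by
        rcases t with _ | ⟨_, _⟩
        · exact absurd (List.length_eq_zero_iff.1 hlen'.symm).symm htt'
        · simp
      calc δ * c ^ ((i :: t).length - 1) = c * (δ * c ^ (t.length - 1)) := by
            rw [List.length_cons, Nat.add_sub_cancel, ← Nat.sub_add_cancel ht, pow_succ,
              Nat.add_sub_cancel]
            ring
        _ ≤ c * dist x' y' := by gcongr; exact ih hlen' htt' hx' hy'
        _ ≤ dist (f i x') (f i y') := hc i x' y'
    · calc δ * c ^ ((i :: t).length - 1) ≤ δ := mul_le_of_le_one_right hδ0 (pow_le_one₀ hc0 hc1)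
        _ ≤ dist (f i x') (f j y') :=
          hδ i j hij _ (mem_image_of_mem _ (wordImage_subset f hQ t hx'))
            _ (mem_image_of_mem _ (wordImage_subset f hQ t' hy'))

end Separation

section Affine

lemma lipschitzWith_mul_add {ρ : ℝ≥0} {r : ℝ} (hr : |r| ≤ ρ) (a : ℝ) :
    LipschitzWith ρ (fun t : ℝ => r * t + a) :=
  LipschitzWith.of_dist_le_mul fun x y => by
    rw [Real.dist_eq, Real.dist_eq, show r * x + a - (r * y + a) = r * (x - y) by ring, abs_mul]
    gcongr

lemma exists_lipschitzWith_mul_add_of_lt_one {ι : Type*} [Fintype ι] {r : ι → ℝ}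
    (hr0 : ∀ j, 0 ≤ r j) (hr1 : ∀ j, r j < 1) (a : ι → ℝ) :
    ∃ ρ : ℝ≥0, ρ < 1 ∧ ∀ j, LipschitzWith ρ (fun t : ℝ => r j * t + a j) := by
  refine ⟨Finset.univ.sup fun j => (r j).toNNReal,
    (Finset.sup_lt_iff zero_lt_one).2 fun j _ => by simpa using hr1 j,
    fun j => lipschitzWith_mul_add ?_ (a j)⟩
  rw [abs_of_nonneg (hr0 j), ← Real.toNNReal_le_iff_le_coe]
  exact Finset.le_sup (f := fun i => (r i).toNNReal) (Finset.mem_univ j)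

lemma mul_dist_le_dist_mul_add {c r s : ℝ} (hc : 0 ≤ c) (hcs : c ≤ s) (hsr : s ≤ r)
    (a b : ℝ) (x y : ℝ × ℝ) :
    c * dist x y ≤ dist ((r * x.1 + a, s * x.2 + b) : ℝ × ℝ) (r * y.1 + a, s * y.2 + b) := by
  simp only [Prod.dist_eq, Real.dist_eq, mul_max_of_nonneg _ _ hc]
  rw [show r * x.1 + a - (r * y.1 + a) = r * (x.1 - y.1) by ring,
    show s * x.2 + b - (s * y.2 + b) = s * (x.2 - y.2) by ring, abs_mul, abs_mul,
    abs_of_nonneg (hc.trans (hcs.trans hsr)), abs_of_nonneg (hc.trans hcs)]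
  exact max_le_max (by gcongr; linarith) (by gcongr)

end Affine

theorem stmt2_general (m : ℕ)
    (r s a b : Fin m → ℝ)
    (hs : ∀ j, 0 < s j) (hsr : ∀ j, s j < r j) (hr1 : ∀ j, r j < 1)
    (f : Fin m → ℝ × ℝ → ℝ × ℝ)
    (hf : ∀ j x, f j x = (r j * x.1 + a j, s j * x.2 + b j))
    (Q : Set (ℝ × ℝ)) (hQ : Q = Set.Icc (0, 0) (1, 1))
    (hRQ : ∀ j, f j '' Q ⊆ Q)
    (E : Set (ℝ × ℝ)) (hEc : IsCompact E) (hEne : E.Nonempty)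
    (hEQ : E ⊆ Q) (hE : E = ⋃ j, f j '' E)
    -- δ is the minimal distance between distinct rectangles R_i, R_j
    (δ : ℝ)
    (hδ : IsLeast {d : ℝ | ∃ i j, i ≠ j ∧ ∃ x ∈ f i '' Q, ∃ y ∈ f j '' Q,
      d = dist x y} δ)
    -- s_* = min_j s_j
    (sstar : ℝ) (hsstar : IsLeast (Set.range s) sstar)
    -- vertical segment condition at level ñ
    (nt : ℕ) (hnt : 1 ≤ nt)
    (hvert : ∀ x₁ ∈ Set.Icc (0:ℝ) 1, ∃ u v : Fin nt → Fin m, u ≠ v ∧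
      ((List.ofFn u).foldr (fun j S => f j '' S) Q ∩
        ({x₁} ×ˢ Set.Icc (0:ℝ) 1)).Nonempty ∧
      ((List.ofFn v).foldr (fun j S => f j '' S) Q ∩
        ({x₁} ×ˢ Set.Icc (0:ℝ) 1)).Nonempty) :
    ∀ x₁ ∈ Set.Icc (0:ℝ) 1,
      δ * sstar ^ (nt - 1) ≤ Metric.diam (({x₁} ×ˢ Set.Icc (0:ℝ) 1) ∩ E) := by
  intro x₁ hx₁
  have hsemi : ∀ j, Semiconj Prod.fst (f j) (fun t => r j * t + a j) := fun j x => by rw [hf]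
  obtain ⟨ρ, hρ, hg⟩ :=
    exists_lipschitzWith_mul_add_of_lt_one (fun j => (hs j).le.trans (hsr j).le) hr1 a
  have hproj : Prod.fst '' Q ⊆ Prod.fst '' E :=
    image_subset_image_of_cover continuous_fst hsemi hg hρ hEc hEne hE.symm.subset
      ((hQ ▸ isCompact_Icc).image continuous_fst).isBounded hnt fun _ ⟨z, hz, hz₁⟩ => by
        obtain ⟨u, -, -, ⟨w, hwu, hw, -⟩, -⟩ := hvert z.1 ⟨(hQ ▸ hz).1.1, (hQ ▸ hz).2.1⟩
        exact ⟨List.ofFn u, List.length_ofFn, w, hwu, hz₁ ▸ hw⟩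
  have hfE : ∀ j, f j '' E ⊆ E := fun j =>
    (subset_iUnion (fun i => f i '' E) j).trans hE.symm.subset
  have hsection : ∀ l : List (Fin m), (wordImage f l Q ∩ ({x₁} ×ˢ Icc 0 1)).Nonempty →
      ∃ p ∈ wordImage f l Q, p ∈ ({x₁} ×ˢ Icc 0 1) ∩ E := by
    rintro l ⟨z, hzl, hzx, -⟩
    obtain ⟨p, hpl, hpz⟩ := image_wordImage_mono_of_semiconj hsemi hproj l (mem_image_of_mem _ hzl)
    have hpE := wordImage_subset f hfE l hpl
    have hpQ : p ∈ Icc (0, 0) (1, 1) := hQ ▸ hEQ hpE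
    exact ⟨p, wordImage_mono f l hEQ hpl, ⟨hpz.trans hzx, hpQ.1.2, hpQ.2.2⟩, hpE⟩
  obtain ⟨j₀, rfl⟩ := hsstar.1
  have hδ0 : 0 ≤ δ := by
    obtain ⟨-, -, -, x, -, y, -, rfl⟩ := hδ.1
    exact dist_nonneg
  have hexpand : ∀ j x y, s j₀ * dist x y ≤ dist (f j x) (f j y) := fun j x y => by
    rw [hf, hf]
    exact mul_dist_le_dist_mul_add (hs j₀).le (hsstar.2 ⟨j, rfl⟩) (hsr j).le _ _ x y
  obtain ⟨u, v, huv, hu, hv⟩ := hvert x₁ hx₁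
  obtain ⟨p, hpu, hpE⟩ := hsection _ hu
  obtain ⟨q, hqv, hqE⟩ := hsection _ hv
  calc δ * s j₀ ^ (nt - 1) = δ * s j₀ ^ ((List.ofFn u).length - 1) := by rw [List.length_ofFn]
    _ ≤ dist p q :=
      le_dist_of_mem_wordImage hRQ hδ0
        (fun i j hij x hx y hy => hδ.2 ⟨i, j, hij, x, hx, y, hy, rfl⟩)
        (hs j₀).le ((hsr j₀).trans (hr1 j₀)).le hexpand (by simp) (List.ofFn_injective.ne huv)
        hpu hqv
    _ ≤ _ := Metric.dist_le_diam_of_mem (hEc.isBounded.subset inter_subset_right) hpE hqE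

/-- under the vertical-segment condition at level `ñ`, every
vertical section of `E` has diameter at least `δ · s_*^(ñ-1)`. -/
theorem stmt2 (m : ℕ) (hm : 0 < m)
    (r s a b : Fin m → ℝ)
    (hs : ∀ j, 0 < s j) (hsr : ∀ j, s j < r j) (hr1 : ∀ j, r j < 1)
    (f : Fin m → ℝ × ℝ → ℝ × ℝ)
    (hf : ∀ j x, f j x = (r j * x.1 + a j, s j * x.2 + b j))
    (Q : Set (ℝ × ℝ)) (hQ : Q = Set.Icc (0, 0) (1, 1))
    (hRQ : ∀ j, f j '' Q ⊆ Q)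
    (hdisj : ∀ i j, i ≠ j → Disjoint (f i '' Q) (f j '' Q))
    (E : Set (ℝ × ℝ)) (hEc : IsCompact E) (hEne : E.Nonempty)
    (hEQ : E ⊆ Q) (hE : E = ⋃ j, f j '' E)
    -- δ is the minimal distance between distinct rectangles R_i, R_j
    (δ : ℝ)
    (hδ : IsLeast {d : ℝ | ∃ i j, i ≠ j ∧ ∃ x ∈ f i '' Q, ∃ y ∈ f j '' Q,
      d = dist x y} δ)
    -- s_* = min_j s_j
    (sstar : ℝ) (hsstar : IsLeast (Set.range s) sstar)
    -- vertical segment condition at level ñ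
    (nt : ℕ) (hnt : 1 ≤ nt)
    (hvert : ∀ x₁ ∈ Set.Icc (0:ℝ) 1, ∃ u v : Fin nt → Fin m, u ≠ v ∧
      ((List.ofFn u).foldr (fun j S => f j '' S) Q ∩
        ({x₁} ×ˢ Set.Icc (0:ℝ) 1)).Nonempty ∧
      ((List.ofFn v).foldr (fun j S => f j '' S) Q ∩
        ({x₁} ×ˢ Set.Icc (0:ℝ) 1)).Nonempty) :
    ∀ x₁ ∈ Set.Icc (0:ℝ) 1,
      δ * sstar ^ (nt - 1) ≤ Metric.diam (({x₁} ×ˢ Set.Icc (0:ℝ) 1) ∩ E) :=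
  stmt2_general m r s a b hs hsr hr1 f hf Q hQ hRQ E hEc hEne hEQ hE δ hδ sstar hsstar nt hnt hvert
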